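/- Any PCP solution over the instance W constructed from a normal system must begin with the pair (d·ℓ_d(fw), dd): if (u_1,v_1),...,(u_m,v_m) is a sequence of pairs from W with u_1⋯u_m = v_1⋯v_m and m ≥ 1, then (u_1, v_1) = (d·ℓ_d(fw), dd). -/

import Mathlib

/-- The alphabet `{a, b, c, f, d}`: `a, b` are the letters of the normal
system, and `c`, `f`, `d` are new marker letters. -/
inductive Γ | a | b | c | f | d
deriving DecidableEq

/-- `x` is one of the normal-system letters `a, b`. -/
def isAB (x : Γ) : Prop := x = Γ.a ∨ x = Γ.b

/-- The left desynchronization map `ℓ_d`: insert `d` before every letter. -/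
def ld (v : List Γ) : List Γ := v.flatMap (fun x => [Γ.d, x])

/-- The right desynchronization map `r_d`: insert `d` after every letter. -/
def rd (v : List Γ) : List Γ := v.flatMap (fun x => [x, Γ.d])

/-- One derivation step of the normal system with rule set `P`:
`u → v` iff there is a rule `α X ↦ X β` in `P` (the pair `(α, β)`) and a
word `x` with `u = α x` and `v = x β`. -/
def Step (P : List (List Γ × List Γ)) (u v : List Γ) : Prop :=
  ∃ p ∈ P, ∃ x : List Γ, u = p.1 ++ x ∧ v = x ++ p.2

/-- The rules `P` of a normal system over `{a, b}` with all rule words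
nonempty. -/
def GoodRules (P : List (List Γ × List Γ)) : Prop :=
  ∀ p ∈ P, p.1 ≠ [] ∧ p.2 ≠ [] ∧ (∀ x ∈ p.1, isAB x) ∧ (∀ x ∈ p.2, isAB x)

/-- A word over `{a, b}` that is nonempty. -/
def GoodWord (w : List Γ) : Prop := w ≠ [] ∧ ∀ x ∈ w, isAB x

/-- The PCP instance constructed from the normal system `S = (w, P)` and the
target word `u`:
`W = {(d·ℓ_d(fw), dd), (dd, r_d(fu)·d), (da, ad), (db, bd)}
   ∪ {(ℓ_d(c^j f), r_d(f α_j)), (ℓ_d(β_j), r_d(c^j)) : j = 1, ..., t}`,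
where the `j`-th rule (1-indexed) of `P` is `α_j X ↦ X β_j`. -/
def instW (P : List (List Γ × List Γ)) (w u : List Γ) :
    List (List Γ × List Γ) :=
  [(Γ.d :: ld (Γ.f :: w), [Γ.d, Γ.d]),
   ([Γ.d, Γ.d], rd (Γ.f :: u) ++ [Γ.d]),
   ([Γ.d, Γ.a], [Γ.a, Γ.d]),
   ([Γ.d, Γ.b], [Γ.b, Γ.d])] ++
  (P.zipIdx.map Prod.swap).flatMap (fun jp =>
    [(ld (List.replicate (jp.1 + 1) Γ.c ++ [Γ.f]), rd (Γ.f :: jp.2.1)),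
     (ld jp.2.2, rd (List.replicate (jp.1 + 1) Γ.c))])

/-- A PCP instance `W` has a solution: some nonempty sequence of pairs from
`W` has equal concatenations of first components and of second components. -/
def Solution (W : List (List Γ × List Γ)) : Prop :=
  ∃ s : List (List Γ × List Γ), s ≠ [] ∧ (∀ p ∈ s, p ∈ W) ∧
    (s.map Prod.fst).flatten = (s.map Prod.snd).flatten

/-
Every first component of a pair of `instW P w u` is empty or starts with `d`, while every second
component is nonempty and starts with a letter other than `d`, except for the initial pair
`(d·ℓ_d(fw), dd)`. So the common word of a solution starts with `d`, and reading it off the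
second components shows that the first pair is the initial one.
-/

theorem List.forall_mem_head?_flatten {α : Type*} {L : List (List α)} {x : α}
    (h : ∀ l ∈ L, ∀ y ∈ l.head?, y = x) : ∀ y ∈ L.flatten.head?, y = x := by
  induction L with
  | nil => simp
  | cons l L ih =>
    intro y hy
    rw [List.flatten_cons, List.head?_append] at hy
    cases hl : l.head? with
    | none => exact ih (fun l' hl' => h l' (List.mem_cons_of_mem _ hl')) y (by simpa [hl] using hy)
    | some z => exact h l List.mem_cons_self y (by simpa [hl] using hy)

@[simp] theorem ld_nil : ld [] = [] := rfl

@[simp] theorem ld_cons (x : Γ) (v : List Γ) : ld (x :: v) = Γ.d :: x :: ld v := rfl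

@[simp] theorem rd_cons (x : Γ) (v : List Γ) : rd (x :: v) = x :: Γ.d :: rd v := rfl

theorem head?_ld (v : List Γ) : ∀ y ∈ (ld v).head?, y = Γ.d := by
  cases v <;> simp

section instW

variable {P : List (List Γ × List Γ)} {w u : List Γ} {p : List Γ × List Γ}

theorem mem_instW_iff :
    p ∈ instW P w u ↔
      p = (Γ.d :: ld (Γ.f :: w), [Γ.d, Γ.d]) ∨ p = ([Γ.d, Γ.d], rd (Γ.f :: u) ++ [Γ.d]) ∨
      p = ([Γ.d, Γ.a], [Γ.a, Γ.d]) ∨ p = ([Γ.d, Γ.b], [Γ.b, Γ.d]) ∨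
      ∃ jr ∈ P.zipIdx.map Prod.swap,
        p = (ld (List.replicate (jr.1 + 1) Γ.c ++ [Γ.f]), rd (Γ.f :: jr.2.1)) ∨
        p = (ld jr.2.2, rd (List.replicate (jr.1 + 1) Γ.c)) := by
  simp only [instW, List.mem_append, List.mem_cons, List.mem_flatMap, List.not_mem_nil, or_false,
    or_assoc]

theorem head?_fst_eq_d_of_mem_instW (hp : p ∈ instW P w u) : ∀ y ∈ p.1.head?, y = Γ.d := by
  rcases mem_instW_iff.1 hp with rfl | rfl | rfl | rfl | ⟨jr, -, rfl | rfl⟩ <;>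
    first | exact head?_ld _ | simp

theorem snd_ne_nil_of_mem_instW (hp : p ∈ instW P w u) : p.2 ≠ [] := by
  rcases mem_instW_iff.1 hp with rfl | rfl | rfl | rfl | ⟨jr, -, rfl | rfl⟩ <;>
    simp [List.replicate_succ]

theorem eq_initial_of_mem_instW_of_head?_snd (hp : p ∈ instW P w u)
    (hd : p.2.head? = some Γ.d) : p = (Γ.d :: ld (Γ.f :: w), [Γ.d, Γ.d]) := by
  rcases mem_instW_iff.1 hp with rfl | rfl | rfl | rfl | ⟨jr, -, rfl | rfl⟩ <;>
    simp_all [List.replicate_succ]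

end instW

theorem pcp_solution_starts_with_initial_pair_general
    (P : List (List Γ × List Γ)) (w u : List Γ)
    (s : List (List Γ × List Γ)) (hs : s ≠ [])
    (hmem : ∀ p ∈ s, p ∈ instW P w u)
    (heq : (s.map Prod.fst).flatten = (s.map Prod.snd).flatten) :
    s.head? = some (Γ.d :: ld (Γ.f :: w), [Γ.d, Γ.d]) := by
  obtain ⟨p, t, rfl⟩ := List.exists_cons_of_ne_nil hs
  have hp := hmem p List.mem_cons_self
  obtain ⟨x, q, hpq⟩ := List.exists_cons_of_ne_nil (snd_ne_nil_of_mem_instW hp)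
  have hx : x = Γ.d := by
    refine List.forall_mem_head?_flatten (L := (p :: t).map Prod.fst) ?_ x ?_
    · simp only [List.mem_map]
      rintro _ ⟨r, hr, rfl⟩
      exact head?_fst_eq_d_of_mem_instW (hmem r hr)
    · rw [heq]
      simp [hpq]
  subst hx
  simpa using eq_initial_of_mem_instW_of_head?_snd hp (by simp [hpq])

theorem pcp_solution_starts_with_initial_pair
    (P : List (List Γ × List Γ)) (w u : List Γ)
    (hP : GoodRules P) (hw : GoodWord w) (hu : GoodWord u)
    (s : List (List Γ × List Γ)) (hs : s ≠ [])
    (hmem : ∀ p ∈ s, p ∈ instW P w u)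
    (heq : (s.map Prod.fst).flatten = (s.map Prod.snd).flatten) :
    s.head? = some (Γ.d :: ld (Γ.f :: w), [Γ.d, Γ.d]) :=
  pcp_solution_starts_with_initial_pair_general P w u s hs hmem heq
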